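/- arXiv:2502.07489 — 2 statements merged into one kernel-verified Lean document; each statement's English description precedes it below -/
import Mathlib

section
/- (Lemma 1 of the paper.) Let T > 0 and let x : [0,T] → ℝ be continuously differentiable. For ε > 0 with K := T/ε ∈ ℕ, define the divided differences x^{diff,ε}_k := (x(kε) − x((k−1)ε))/ε for k = 1,…,K, and the numerical standard deviation numstd[(y_k)_{k=1:K}] := √((1/K)∑_{k=1}^{K}(y_k − ȳ)²) where ȳ = (1/K)∑_{k=1}^{K} y_k. Then numstd[(x^{diff,ε}_k)_{k=1:K}] → MGD(x) as ε → 0 (along ε with T/ε ∈ ℕ). -/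
/-!
With `c := (x T - x 0) / T`, the divided differences telescope to mean `c`, which is also the mean
of `x'` and hence the minimiser in `MGD` (variance decomposition). By the mean value theorem the
`k`-th divided difference is `x' ξₖ` for some `ξₖ` in its cell, so `numstd²` is `1/T` times a
Riemann sum of `(x' - c)²`, which converges to `∫₀ᵀ (x' - c)²` by uniform continuity of `x'` on
`[0, T]`. Finally `|√u - √v| ≤ √|u - v|` passes the convergence through the square root.
-/

open MeasureTheory intervalIntegral

/-- The mean gradient deviation of `x : [0,T] → ℝ`:
`MGD(x) = min_{c ∈ ℝ} √((1/T)∫₀ᵀ (x'(t) − c)² dt)` (as an infimum over `c`). -/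
noncomputable def MGD (T : ℝ) (x : ℝ → ℝ) : ℝ :=
  ⨅ c : ℝ, Real.sqrt ((1 / T) * ∫ t in (0:ℝ)..T, (deriv x t - c) ^ 2)

/-- The numerical standard deviation of the finite tuple `(y 0, …, y (K-1))`:
`numstd[(y_k)] = √((1/K)∑_k (y_k − ȳ)²)` where `ȳ` is the arithmetic mean. -/
noncomputable def numstd (K : ℕ) (y : ℕ → ℝ) : ℝ :=
  Real.sqrt ((1 / (K : ℝ)) * ∑ k ∈ Finset.range K,
    (y k - (1 / (K : ℝ)) * ∑ j ∈ Finset.range K, y j) ^ 2)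

open Set Finset

lemma Real.sqrt_sub_sqrt_le_sqrt_abs_sub (u v : ℝ) : √u - √v ≤ √|u - v| := by
  rcases lt_or_ge u v with huv | hvu
  · linarith [Real.sqrt_le_sqrt huv.le, Real.sqrt_nonneg |u - v|]
  rw [abs_of_nonneg (sub_nonneg.2 hvu), sub_le_iff_le_add, Real.sqrt_le_left (by positivity)]
  rcases lt_or_ge v 0 with hv | hv
  · rw [Real.sqrt_eq_zero_of_nonpos hv.le, add_zero, Real.sq_sqrt (by linarith)]
    linarith
  · nlinarith [Real.sq_sqrt hv, Real.sq_sqrt (sub_nonneg.2 hvu),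
      mul_nonneg (Real.sqrt_nonneg (u - v)) (Real.sqrt_nonneg v)]

lemma Real.abs_sqrt_sub_sqrt_le (u v : ℝ) : |√u - √v| ≤ √|u - v| :=
  abs_sub_le_iff.2 ⟨Real.sqrt_sub_sqrt_le_sqrt_abs_sub u v,
    abs_sub_comm u v ▸ Real.sqrt_sub_sqrt_le_sqrt_abs_sub v u⟩

lemma integral_sub_sq_eq_integral_sub_mean_sq_add {f : ℝ → ℝ} (hf : Continuous f) {a b m : ℝ}
    (hm : ∫ t in a..b, f t = (b - a) * m) (c : ℝ) :
    ∫ t in a..b, (f t - c) ^ 2 = (∫ t in a..b, (f t - m) ^ 2) + (b - a) * (m - c) ^ 2 := by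
  have hsplit : (fun t => (f t - c) ^ 2)
      = fun t => (f t - m) ^ 2 + (2 * (m - c) * f t + (c ^ 2 - m ^ 2)) := by
    funext t; ring
  rw [hsplit, intervalIntegral.integral_add, intervalIntegral.integral_add,
    intervalIntegral.integral_const_mul, intervalIntegral.integral_const, hm, smul_eq_mul]
  · ring
  all_goals exact Continuous.intervalIntegrable (by fun_prop) _ _

lemma MGD_eq_sqrt_integral_sub_mean_sq {T : ℝ} (hT : 0 < T) {x : ℝ → ℝ} (hx : ContDiff ℝ 1 x) :
    MGD T x = √((1 / T) * ∫ t in (0:ℝ)..T, (deriv x t - (x T - x 0) / T) ^ 2) := by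
  have hx' : Continuous (deriv x) := hx.continuous_deriv le_rfl
  have hmean : ∫ t in (0:ℝ)..T, deriv x t = (T - 0) * ((x T - x 0) / T) := by
    rw [integral_deriv_eq_sub (fun t _ => hx.differentiable one_ne_zero t)
      (hx'.intervalIntegrable 0 T), sub_zero, mul_div_cancel₀ _ hT.ne']
  refine le_antisymm (ciInf_le ⟨0, by rintro _ ⟨c, rfl⟩; positivity⟩ _) (le_ciInf fun c => ?_)
  rw [integral_sub_sq_eq_integral_sub_mean_sq_add hx' hmean c]
  gcongr
  exact le_add_of_nonneg_right (mul_nonneg (by linarith) (sq_nonneg _))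

lemma abs_integral_sub_mul_le {g : ℝ → ℝ} {a b ξ η : ℝ} (hab : a ≤ b)
    (hg : IntervalIntegrable g volume a b) (h : ∀ s ∈ Icc a b, |g s - g ξ| ≤ η) :
    |(∫ s in a..b, g s) - (b - a) * g ξ| ≤ (b - a) * η := by
  have hint : (∫ s in a..b, g s) - (b - a) * g ξ = ∫ s in a..b, (g s - g ξ) := by
    rw [intervalIntegral.integral_sub hg intervalIntegrable_const, intervalIntegral.integral_const,
      smul_eq_mul]
  have hbound : ∀ s ∈ uIoc a b, ‖g s - g ξ‖ ≤ η := fun s hs =>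
    h s (Ioc_subset_Icc_self (uIoc_of_le hab ▸ hs))
  rw [hint, ← Real.norm_eq_abs, mul_comm, ← abs_of_nonneg (sub_nonneg.2 hab)]
  exact norm_integral_le_of_norm_le_const hbound

lemma abs_sum_mul_sub_integral_le {g : ℝ → ℝ} (hg : Continuous g) {ε η : ℝ} (hε : 0 ≤ ε)
    {K : ℕ} {ξ : ℕ → ℝ} (h : ∀ k < K, ∀ s ∈ Icc (k * ε) ((k + 1) * ε), |g s - g (ξ k)| ≤ η) :
    |(∑ k ∈ range K, ε * g (ξ k)) - ∫ s in (0:ℝ)..K * ε, g s| ≤ K * ε * η := by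
  have hadj : ∫ s in (0:ℝ)..K * ε, g s = ∑ k ∈ range K, ∫ s in (k * ε)..((k + 1) * ε), g s := by
    have := sum_integral_adjacent_intervals (a := fun k : ℕ => k * ε) (n := K) (μ := volume)
      (fun k _ => hg.intervalIntegrable _ _)
    push_cast at this
    rw [this, zero_mul]
  have hstep : ∀ k : ℕ, ((k : ℝ) + 1) * ε - k * ε = ε := fun k => by ring
  rw [abs_sub_comm, hadj, ← sum_sub_distrib]
  calc |∑ k ∈ range K, ((∫ s in (k * ε)..((k + 1) * ε), g s) - ε * g (ξ k))|
      ≤ ∑ k ∈ range K, |(∫ s in (k * ε)..((k + 1) * ε), g s) - ε * g (ξ k)| :=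
        abs_sum_le_sum_abs _ _
    _ ≤ ∑ k ∈ range K, ε * η := sum_le_sum fun k hk => by
        simpa only [hstep] using abs_integral_sub_mul_le (by nlinarith) (hg.intervalIntegrable _ _)
          (h k (mem_range.1 hk))
    _ = K * ε * η := by rw [sum_const, card_range, nsmul_eq_mul, mul_assoc]

lemma exists_pos_abs_sum_mul_sub_integral_lt {g : ℝ → ℝ} (hg : Continuous g) {T δ : ℝ}
    (hT : 0 < T) (hδ : 0 < δ) :
    ∃ ε₀ > 0, ∀ ε, 0 < ε → ε < ε₀ → ∀ K : ℕ, (K : ℝ) * ε = T → ∀ ξ : ℕ → ℝ,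
      (∀ k < K, ξ k ∈ Icc (k * ε) ((k + 1) * ε)) →
      |(∑ k ∈ range K, ε * g (ξ k)) - ∫ s in (0:ℝ)..T, g s| < δ := by
  obtain ⟨η, hη, hmod⟩ := Metric.uniformContinuousOn_iff.1
    (isCompact_Icc.uniformContinuousOn_of_continuous hg.continuousOn) (δ / (2 * T))
    (by positivity)
  refine ⟨η, hη, fun ε hε hεη K hKε ξ hξ => ?_⟩
  have hsub : ∀ k < K, Icc ((k : ℝ) * ε) ((k + 1) * ε) ⊆ Icc 0 T := fun k hk =>
    Icc_subset_Icc (by positivity) (hKε ▸ by gcongr; exact_mod_cast hk)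
  have hclose : ∀ k < K, ∀ s ∈ Icc ((k : ℝ) * ε) ((k + 1) * ε),
      |g s - g (ξ k)| ≤ δ / (2 * T) := by
    intro k hk s hs
    have hstep : ((k : ℝ) + 1) * ε = k * ε + ε := by ring
    have hdist : dist s (ξ k) < η := by
      rw [Real.dist_eq, abs_lt]
      constructor <;> linarith [hs.1, hs.2, (hξ k hk).1, (hξ k hk).2]
    exact (hmod s (hsub k hk hs) (ξ k) (hsub k hk (hξ k hk)) hdist).le
  have hbound := abs_sum_mul_sub_integral_le hg hε.le hclose
  rw [hKε] at hbound
  calc _ ≤ T * (δ / (2 * T)) := hbound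
    _ < δ := by field_simp; linarith

lemma sum_range_sub_div (x : ℝ → ℝ) (ε : ℝ) (K : ℕ) :
    ∑ k ∈ range K, (x ((k + 1) * ε) - x (k * ε)) / ε = (x (K * ε) - x 0) / ε := by
  have := sum_range_sub (fun k : ℕ => x (k * ε)) K
  push_cast at this
  rw [← sum_div, this, zero_mul]

lemma exists_numstd_slope_eq_sqrt_sum {x : ℝ → ℝ} (hx : Differentiable ℝ x) {ε T : ℝ}
    (hε : 0 < ε) {K : ℕ} (hKε : (K : ℝ) * ε = T) :
    ∃ ξ : ℕ → ℝ, (∀ k : ℕ, ξ k ∈ Icc (k * ε) ((k + 1) * ε)) ∧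
      numstd K (fun k => (x ((k + 1) * ε) - x (k * ε)) / ε) =
        √((1 / T) * ∑ k ∈ range K, ε * (deriv x (ξ k) - (x T - x 0) / T) ^ 2) := by
  have hmvt : ∀ k : ℕ, ∃ ξ ∈ Icc ((k : ℝ) * ε) ((k + 1) * ε),
      (x ((k + 1) * ε) - x (k * ε)) / ε = deriv x ξ := by
    intro k
    obtain ⟨ξ, hξ, heq⟩ := exists_deriv_eq_slope x (by nlinarith : (k : ℝ) * ε < (k + 1) * ε)
      hx.continuous.continuousOn hx.differentiableOn
    refine ⟨ξ, Ioo_subset_Icc_self hξ, ?_⟩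
    rw [heq]
    ring_nf
  choose ξ hξ heq using hmvt
  refine ⟨ξ, hξ, ?_⟩
  subst hKε
  have hmean : (1 / (K : ℝ)) * ∑ j ∈ range K, (x ((j + 1) * ε) - x (j * ε)) / ε
      = (x (K * ε) - x 0) / (K * ε) := by
    rw [sum_range_sub_div]
    field_simp
  rw [numstd, hmean, mul_sum, mul_sum]
  congr 1
  refine sum_congr rfl fun k _ => ?_
  rw [heq k]
  field_simp

/-- **Lemma 1 of the paper.** For `T > 0` and `x` continuously
differentiable, the numerical standard deviation of the divided differences
`(x(kε) − x((k−1)ε))/ε`, `k = 1,…,K`, converges to `MGD(x)` as `ε → 0` along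
step sizes `ε` with `T/ε = K ∈ ℕ`. -/
theorem statement10 (T : ℝ) (hT : 0 < T) (x : ℝ → ℝ) (hx : ContDiff ℝ 1 x) :
    ∀ δ > 0, ∃ ε₀ > 0, ∀ ε : ℝ, 0 < ε → ε < ε₀ → ∀ K : ℕ, (K : ℝ) * ε = T →
      |numstd K (fun k => (x (((k : ℝ) + 1) * ε) - x ((k : ℝ) * ε)) / ε) - MGD T x| < δ := by
  intro δ hδ
  set c := (x T - x 0) / T
  have hg : Continuous fun t => (deriv x t - c) ^ 2 := by
    have := hx.continuous_deriv le_rfl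
    fun_prop
  obtain ⟨ε₀, hε₀, hriemann⟩ :=
    exists_pos_abs_sum_mul_sub_integral_lt hg hT (mul_pos hT (pow_pos hδ 2))
  refine ⟨ε₀, hε₀, fun ε hε hεε₀ K hKε => ?_⟩
  obtain ⟨ξ, hξ, hnumstd⟩ :=
    exists_numstd_slope_eq_sqrt_sum (hx.differentiable one_ne_zero) hε hKε
  have hsum := hriemann ε hε hεε₀ K hKε ξ fun k _ => hξ k
  rw [hnumstd, MGD_eq_sqrt_integral_sub_mean_sq hT hx]
  calc _ ≤ √|(1 / T) * ∑ k ∈ range K, ε * (deriv x (ξ k) - c) ^ 2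
          - (1 / T) * ∫ t in (0:ℝ)..T, (deriv x t - c) ^ 2| := Real.abs_sqrt_sub_sqrt_le _ _
    _ < √(δ ^ 2) := by
      refine Real.sqrt_lt_sqrt (abs_nonneg _) ?_
      rw [← mul_sub, abs_mul, abs_of_pos (by positivity), one_div_mul_eq_div, div_lt_iff₀ hT]
      linarith
    _ = δ := Real.sqrt_sq hδ.le
end

section
/- Let T > 0, let (Ω, 𝔽, μ) be a probability space, and let X : Ω → (ℝ → ℝ) be such that for every ω ∈ Ω, X ω restricted to [0,T] is continuously differentiable, the map (ω, t) ↦ (X ω)'(t) is jointly measurable, and there is a constant M with |(X ω)'(t)| ≤ M for all ω and t ∈ [0,T]. Define MPGD := (1/T)∫₀ᵀ √(E[((X·)'(t) − E[(X·)'(t)])²]) dt. For ε > 0 with K := T/ε ∈ ℕ and grid points t = ε, 2ε, …, T, let σ_ε(t) denote the standard deviation (over ω) of the random divided difference ((X ω)(t) − (X ω)(t−ε))/ε. Then (ε/T)∑_{t=ε,2ε,…,T} σ_ε(t) → MPGD as ε → 0 (along ε with T/ε ∈ ℕ). -/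
open MeasureTheory intervalIntegral

/-!
By the mean value theorem the divided difference of `X ω` over a grid cell equals `(X ω)'(ξ)`
for some `ξ` in the cell, so it differs from `(X ω)'(t)`, for every `t` in the cell, by at most
the modulus of continuity `w_ω(ε)` of `(X ω)'` on `[0,T]`. For random variables bounded by `M`
the variances differ by at most `8 M E|Y - Z|`, and `|√a - √b| ≤ √|a - b|`; so on every cell
the standard deviation of the divided difference is within `√(8 M E[w(ε)])` of the pointwise
standard deviation `σ(t)` of the derivative, and the Riemann sum of the former is within the
same distance of the time average of `σ`. Finally `E[w(ε)] → 0` by dominated convergence,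
since each `(X ω)'` is uniformly continuous on `[0,T]`.
-/

/-- The mean point-wise gradient deviation of a random `C¹` function `X` on `[0,T]`:
`MPGD = (1/T)∫₀ᵀ √(E[((X·)'(t) − E[(X·)'(t)])²]) dt`, i.e. the time-average of the
point-wise standard deviation of the derivative. -/
noncomputable def MPGD {Ω : Type*} [MeasurableSpace Ω] (μ : Measure Ω)
    (T : ℝ) (X : Ω → ℝ → ℝ) : ℝ :=
  (1 / T) * ∫ t in (0:ℝ)..T,
    Real.sqrt (∫ ω, (deriv (X ω) t - ∫ ω', deriv (X ω') t ∂μ) ^ 2 ∂μ)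

open ProbabilityTheory Filter Topology Set

theorem Real.abs_sqrt_sub_sqrt_le_s12 (a b : ℝ) : |√a - √b| ≤ √|a - b| := by
  wlog hba : b ≤ a generalizing a b
  · rw [abs_sub_comm, abs_sub_comm a]
    exact this b a (le_of_not_ge hba)
  have hsub : √a ≤ √(a - b) + √b := by
    rcases le_total b 0 with hb | hb
    · rw [Real.sqrt_eq_zero_of_nonpos hb, add_zero]
      exact Real.sqrt_le_sqrt (by linarith)
    · rw [Real.sqrt_le_left (by positivity)]
      nlinarith [Real.sq_sqrt (sub_nonneg.2 hba), Real.sq_sqrt hb,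
        mul_nonneg (Real.sqrt_nonneg (a - b)) (Real.sqrt_nonneg b)]
  rw [abs_of_nonneg (sub_nonneg.2 (Real.sqrt_le_sqrt hba)), abs_of_nonneg (sub_nonneg.2 hba)]
  linarith

theorem abs_sum_sub_integral_le {g : ℝ → ℝ} {c : ℕ → ℝ} {a : ℕ → ℝ} (ha : Monotone a)
    {K : ℕ} {η : ℝ} (hg : IntervalIntegrable g volume (a 0) (a K))
    (hc : ∀ k < K, ∀ t ∈ Ioc (a k) (a (k + 1)), |c k - g t| ≤ η) :
    |∑ k ∈ Finset.range K, (a (k + 1) - a k) * c k - ∫ t in a 0..a K, g t| ≤ (a K - a 0) * η := by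
  have hpiece : ∀ k < K, IntervalIntegrable g volume (a k) (a (k + 1)) := fun k hk =>
    hg.mono_set <| uIcc_subset_uIcc
      (mem_uIcc_of_le (ha (Nat.zero_le k)) (ha hk.le))
      (mem_uIcc_of_le (ha (Nat.zero_le _)) (ha hk))
  have hcell : ∀ k < K, |(a (k + 1) - a k) * c k - ∫ t in a k..a (k + 1), g t|
      ≤ (a (k + 1) - a k) * η := by
    intro k hk
    have hak : a k ≤ a (k + 1) := ha (Nat.le_succ k)
    rw [← smul_eq_mul, ← intervalIntegral.integral_const,
      ← intervalIntegral.integral_sub intervalIntegrable_const (hpiece k hk)]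
    simpa [abs_of_nonneg (sub_nonneg.2 hak), mul_comm] using
      norm_integral_le_of_norm_le_const (a := a k) (b := a (k + 1)) (C := η)
        (f := fun t => c k - g t) fun t ht => hc k hk t (uIoc_of_le hak ▸ ht)
  rw [← sum_integral_adjacent_intervals hpiece, ← Finset.sum_sub_distrib]
  calc _ ≤ ∑ k ∈ Finset.range K, |(a (k + 1) - a k) * c k - ∫ t in a k..a (k + 1), g t| :=
        Finset.abs_sum_le_sum_abs _ _
    _ ≤ ∑ k ∈ Finset.range K, (a (k + 1) - a k) * η :=
        Finset.sum_le_sum fun k hk => hcell k (Finset.mem_range.1 hk)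
    _ = (a K - a 0) * η := by rw [← Finset.sum_mul, Finset.sum_range_sub]

def ratPairsWithin (T ε : ℝ) : Set (ℚ × ℚ) :=
  {p | (p.1 : ℝ) ∈ Icc 0 T ∧ (p.2 : ℝ) ∈ Icc 0 T ∧ |(p.1 : ℝ) - p.2| ≤ ε}

/-- Taking the supremum over rational points only keeps `ratModulus` measurable in a random `d`;
for continuous `d` nothing is lost (`abs_sub_le_ratModulus`). -/
noncomputable def ratModulus (d : ℝ → ℝ) (T ε : ℝ) : ℝ :=
  ⨆ p : ratPairsWithin T ε, |d p.1.1 - d p.1.2|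

section ratModulus

variable {d : ℝ → ℝ} {T ε M : ℝ}

theorem ratModulus_nonneg : 0 ≤ ratModulus d T ε :=
  Real.iSup_nonneg fun _ => abs_nonneg _

theorem ratModulus_le_of_forall {C : ℝ} (hC : 0 ≤ C)
    (h : ∀ p ∈ ratPairsWithin T ε, |d p.1 - d p.2| ≤ C) : ratModulus d T ε ≤ C :=
  Real.iSup_le (fun p => h p.1 p.2) hC

theorem abs_sub_le_two_mul_of_abs_le (hM : ∀ t ∈ Icc 0 T, |d t| ≤ M) {s t : ℝ}
    (hs : s ∈ Icc 0 T) (ht : t ∈ Icc 0 T) : |d s - d t| ≤ 2 * M := by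
  linarith [abs_sub (d s) (d t), hM s hs, hM t ht]

theorem ratModulus_le_two_mul (hM : ∀ t ∈ Icc 0 T, |d t| ≤ M) (hM₀ : 0 ≤ M) :
    ratModulus d T ε ≤ 2 * M :=
  ratModulus_le_of_forall (by positivity) fun _ hp =>
    abs_sub_le_two_mul_of_abs_le hM hp.1 hp.2.1

theorem le_ratModulus (hM : ∀ t ∈ Icc 0 T, |d t| ≤ M) {p : ℚ × ℚ}
    (hp : p ∈ ratPairsWithin T ε) : |d p.1 - d p.2| ≤ ratModulus d T ε :=
  le_ciSup (f := fun p : ratPairsWithin T ε => |d p.1.1 - d p.1.2|)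
    ⟨2 * M, by rintro _ ⟨q, rfl⟩; exact abs_sub_le_two_mul_of_abs_le hM q.2.1 q.2.2.1⟩
    ⟨p, hp⟩

theorem exists_rat_mem_Icc_abs_sub_lt (hT : 0 < T) {s θ : ℝ} (hs : s ∈ Icc 0 T) (hθ : 0 < θ) :
    ∃ q : ℚ, (q : ℝ) ∈ Icc 0 T ∧ |(q : ℝ) - s| < θ := by
  obtain ⟨q, hlo, hhi⟩ := exists_rat_btwn (x := max 0 (s - θ)) (y := min T (s + θ))
    (max_lt (lt_min hT (by linarith [hs.1])) (lt_min (by linarith [hs.2]) (by linarith)))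
  rw [max_lt_iff] at hlo
  rw [lt_min_iff] at hhi
  exact ⟨q, ⟨hlo.1.le, hhi.1.le⟩, abs_sub_lt_iff.2 ⟨by linarith, by linarith⟩⟩

theorem abs_sub_le_ratModulus (hd : Continuous d) (hT : 0 < T)
    (hM : ∀ t ∈ Icc 0 T, |d t| ≤ M) {s t : ℝ} (hs : s ∈ Icc 0 T) (ht : t ∈ Icc 0 T)
    (hst : |s - t| < ε) : |d s - d t| ≤ ratModulus d T ε := by
  refine le_of_forall_pos_lt_add fun η hη => ?_
  obtain ⟨θs, hθs, hds⟩ := Metric.continuous_iff.1 hd s (η / 2) (half_pos hη)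
  obtain ⟨θt, hθt, hdt⟩ := Metric.continuous_iff.1 hd t (η / 2) (half_pos hη)
  have hgap : 0 < (ε - |s - t|) / 2 := by linarith
  obtain ⟨q, hq, hqs⟩ := exists_rat_mem_Icc_abs_sub_lt hT hs (lt_min hgap hθs)
  obtain ⟨r, hr, hrt⟩ := exists_rat_mem_Icc_abs_sub_lt hT ht (lt_min hgap hθt)
  rw [lt_min_iff] at hqs hrt
  have hqr : (q, r) ∈ ratPairsWithin T ε := by
    refine ⟨hq, hr, show |(q : ℝ) - r| ≤ ε from ?_⟩
    have hqsr := abs_sub_le (q : ℝ) s r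
    have hstr := abs_sub_le s t r
    rw [abs_sub_comm (r : ℝ)] at hrt
    linarith
  have hdq : |d q - d s| < η / 2 := hds q hqs.2
  have hdr : |d r - d t| < η / 2 := hdt r hrt.2
  have hsq := abs_sub_le (d s) (d q) (d t)
  have hqt := abs_sub_le (d q) (d r) (d t)
  have hmod : |d q - d r| ≤ ratModulus d T ε := le_ratModulus hM hqr
  rw [abs_sub_comm] at hdq
  linarith

theorem tendsto_ratModulus (hd : Continuous d) :
    Tendsto (ratModulus d T) (𝓝[>] 0) (𝓝 0) := by
  rw [Metric.tendsto_nhdsWithin_nhds]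
  intro η hη
  obtain ⟨θ, hθ, hunif⟩ := Metric.uniformContinuousOn_iff.1
    (isCompact_Icc.uniformContinuousOn_of_continuous hd.continuousOn) (η / 2) (half_pos hη)
  refine ⟨θ, hθ, fun ε hε hεθ => ?_⟩
  rw [Real.dist_0_eq_abs, abs_of_pos hε] at hεθ
  have hle : ratModulus d T ε ≤ η / 2 :=
    ratModulus_le_of_forall (half_pos hη).le fun p hp =>
      (hunif _ hp.1 _ hp.2.1 (hp.2.2.trans_lt hεθ)).le
  rw [Real.dist_0_eq_abs, abs_of_nonneg ratModulus_nonneg]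
  linarith

end ratModulus

theorem Measurable.ratModulus {Ω : Type*} [MeasurableSpace Ω] {d : Ω → ℝ → ℝ}
    (hd : ∀ t, Measurable fun ω => d ω t) (T ε : ℝ) :
    Measurable fun ω => ratModulus (d ω) T ε :=
  .iSup fun _ => ((hd _).sub (hd _)).abs

theorem tendsto_integral_ratModulus {Ω : Type*} [MeasurableSpace Ω] {μ : Measure Ω}
    [IsFiniteMeasure μ] {d : Ω → ℝ → ℝ} {T M : ℝ} (hM₀ : 0 ≤ M)
    (hd : ∀ ω, Continuous (d ω)) (hmeas : ∀ t, Measurable fun ω => d ω t)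
    (hM : ∀ ω, ∀ t ∈ Icc 0 T, |d ω t| ≤ M) :
    Tendsto (fun ε => ∫ ω, ratModulus (d ω) T ε ∂μ) (𝓝[>] 0) (𝓝 0) := by
  simpa using tendsto_integral_filter_of_dominated_convergence (fun _ => 2 * M)
    (.of_forall fun ε => (Measurable.ratModulus hmeas T ε).aestronglyMeasurable)
    (.of_forall fun ε => .of_forall fun ω => by
      rw [Real.norm_eq_abs, abs_of_nonneg ratModulus_nonneg]
      exact ratModulus_le_two_mul (hM ω) hM₀)
    (integrable_const _) (.of_forall fun ω => tendsto_ratModulus (hd ω))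

theorem integrable_of_forall_abs_le {Ω : Type*} [MeasurableSpace Ω] {μ : Measure Ω}
    [IsFiniteMeasure μ] {f : Ω → ℝ} {M : ℝ} (hf : Measurable f) (hM : ∀ ω, |f ω| ≤ M) :
    Integrable f μ :=
  .of_bound hf.aestronglyMeasurable M (.of_forall hM)

section Variance

variable {Ω : Type*} [MeasurableSpace Ω] {μ : Measure Ω} [IsProbabilityMeasure μ]
  {Y Z : Ω → ℝ} {M : ℝ}

theorem abs_integral_le_of_forall_abs_le (hY : ∀ ω, |Y ω| ≤ M) : |μ[Y]| ≤ M := by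
  simpa using norm_integral_le_of_norm_le_const (μ := μ) (f := Y) (C := M)
    (.of_forall fun ω => by rw [Real.norm_eq_abs]; exact hY ω)

theorem abs_variance_sub_variance_le (hYm : Measurable Y) (hZm : Measurable Z)
    (hY : ∀ ω, |Y ω| ≤ M) (hZ : ∀ ω, |Z ω| ≤ M) :
    |Var[Y; μ] - Var[Z; μ]| ≤ 8 * M * ∫ ω, |Y ω - Z ω| ∂μ := by
  have hYi : Integrable Y μ := integrable_of_forall_abs_le hYm hY
  have hZi : Integrable Z μ := integrable_of_forall_abs_le hZm hZ
  set L := ∫ ω, |Y ω - Z ω| ∂μ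
  have hmean : |μ[Y] - μ[Z]| ≤ L := by
    rw [← integral_sub hYi hZi]
    exact abs_integral_le_integral_abs
  have hmY := abs_integral_le_of_forall_abs_le (μ := μ) hY
  have hmZ := abs_integral_le_of_forall_abs_le (μ := μ) hZ
  -- `a² - b² = (a + b)(a - b)` with `|a + b| ≤ 4M` for the centred variables `a`, `b`
  have hpt : ∀ ω, |(Y ω - μ[Y]) ^ 2 - (Z ω - μ[Z]) ^ 2| ≤ 4 * M * (|Y ω - Z ω| + L) := by
    intro ω
    have hsum : |Y ω - μ[Y] + (Z ω - μ[Z])| ≤ 4 * M := by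
      linarith [abs_add_le (Y ω - μ[Y]) (Z ω - μ[Z]), abs_sub (Y ω) (μ[Y]),
        abs_sub (Z ω) (μ[Z]), hY ω, hZ ω]
    have hdiff : |Y ω - μ[Y] - (Z ω - μ[Z])| ≤ |Y ω - Z ω| + L := by
      rw [show Y ω - μ[Y] - (Z ω - μ[Z]) = Y ω - Z ω - (μ[Y] - μ[Z]) by ring]
      linarith [abs_sub (Y ω - Z ω) (μ[Y] - μ[Z])]
    rw [show (Y ω - μ[Y]) ^ 2 - (Z ω - μ[Z]) ^ 2
        = (Y ω - μ[Y] + (Z ω - μ[Z])) * (Y ω - μ[Y] - (Z ω - μ[Z])) by ring, abs_mul]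
    exact mul_le_mul hsum hdiff (abs_nonneg _) ((abs_nonneg _).trans hsum)
  have hsq {W : Ω → ℝ} (hWm : Measurable W) (hW : ∀ ω, |W ω| ≤ M) :
      Integrable (fun ω => (W ω - μ[W]) ^ 2) μ :=
    .of_bound (by fun_prop) ((2 * M) ^ 2) (.of_forall fun ω => by
      have hmW := abs_integral_le_of_forall_abs_le (μ := μ) hW
      have hcen : |W ω - μ[W]| ≤ 2 * M := by linarith [abs_sub (W ω) (μ[W]), hW ω]
      rw [norm_pow, Real.norm_eq_abs]
      exact pow_le_pow_left₀ (abs_nonneg _) hcen 2)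
  have hLi : Integrable (fun ω => |Y ω - Z ω|) μ := (hYi.sub hZi).abs
  rw [variance_eq_integral hYm.aemeasurable, variance_eq_integral hZm.aemeasurable,
    ← integral_sub (hsq hYm hY) (hsq hZm hZ)]
  calc _ ≤ ∫ ω, 4 * M * (|Y ω - Z ω| + L) ∂μ :=
        abs_integral_le_integral_abs.trans (integral_mono (by fun_prop) (by fun_prop) hpt)
    _ = 8 * M * L := by
        rw [MeasureTheory.integral_const_mul, integral_add hLi (integrable_const L)]
        simp only [MeasureTheory.integral_const, probReal_univ, one_smul]
        ring

theorem abs_sqrt_variance_sub_sqrt_variance_le (hYm : Measurable Y) (hZm : Measurable Z)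
    (hY : ∀ ω, |Y ω| ≤ M) (hZ : ∀ ω, |Z ω| ≤ M) :
    |√Var[Y; μ] - √Var[Z; μ]| ≤ √(8 * M * ∫ ω, |Y ω - Z ω| ∂μ) :=
  (Real.abs_sqrt_sub_sqrt_le_s12 _ _).trans
    (Real.sqrt_le_sqrt (abs_variance_sub_variance_le hYm hZm hY hZ))

theorem sqrt_variance_le_of_forall_abs_le (hYm : Measurable Y) (hY : ∀ ω, |Y ω| ≤ M) :
    √Var[Y; μ] ≤ M := by
  have hM₀ : 0 ≤ M := (abs_nonneg _).trans (hY (nonempty_of_isProbabilityMeasure μ).some)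
  have hvar : Var[Y; μ] ≤ M ^ 2 := by
    simpa using variance_le_sq_of_bounded (μ := μ) (a := -M) (b := M)
      (.of_forall fun ω => abs_le.1 (hY ω)) hYm.aemeasurable
  exact (Real.sqrt_le_sqrt hvar).trans_eq (Real.sqrt_sq hM₀)

end Variance

section RandomC1

variable {Ω : Type*} [MeasurableSpace Ω] {X : Ω → ℝ → ℝ}

theorem measurable_sub_of_measurable_deriv (hC1 : ∀ ω, ContDiff ℝ 1 (X ω))
    (hmeas : Measurable fun p : Ω × ℝ => deriv (X p.1) p.2) (a b : ℝ) :
    Measurable fun ω => X ω b - X ω a := by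
  have hftc : (fun ω => X ω b - X ω a) = fun ω => ∫ s in a..b, deriv (X ω) s := by
    funext ω
    exact (integral_deriv_eq_sub (fun s _ => ((hC1 ω).differentiable one_ne_zero).differentiableAt)
      (((hC1 ω).continuous_deriv le_rfl).intervalIntegrable a b)).symm
  rw [hftc]
  exact ((hmeas.stronglyMeasurable.integral_prod_right' (ν := volume.restrict (Ioc a b))).sub
    (hmeas.stronglyMeasurable.integral_prod_right' (ν := volume.restrict (Ioc b a)))).measurable

theorem measurable_variance_section (μ : Measure Ω) [IsFiniteMeasure μ] {F : Ω → ℝ → ℝ}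
    (hF : Measurable fun p : Ω × ℝ => F p.1 p.2) : Measurable fun t => Var[fun ω => F ω t; μ] := by
  have hmean : Measurable fun t => ∫ ω, F ω t ∂μ :=
    (hF.stronglyMeasurable.integral_prod_left' (μ := μ)).measurable
  have hcen : Measurable fun p : Ω × ℝ => (F p.1 p.2 - ∫ ω, F ω p.2 ∂μ) ^ 2 :=
    (hF.sub (hmean.comp measurable_snd)).pow_const 2
  convert (hcen.stronglyMeasurable.integral_prod_left' (μ := μ)).measurable using 2 with t
  exact variance_eq_integral (hF.comp measurable_prodMk_right).aemeasurable

theorem abs_sqrt_variance_slope_sub_le (μ : Measure Ω) [IsProbabilityMeasure μ] {T M : ℝ}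
    (hT : 0 < T) (hC1 : ∀ ω, ContDiff ℝ 1 (X ω))
    (hmeas : Measurable fun p : Ω × ℝ => deriv (X p.1) p.2) (hM₀ : 0 ≤ M)
    (hM : ∀ ω, ∀ t ∈ Icc 0 T, |deriv (X ω) t| ≤ M) {a b t : ℝ} (hab : a < b) (ha : 0 ≤ a)
    (hb : b ≤ T) (ht : t ∈ Icc a b) :
    |√Var[fun ω => (X ω b - X ω a) / (b - a); μ] - √Var[fun ω => deriv (X ω) t; μ]|
      ≤ √(8 * M * ∫ ω, ratModulus (deriv (X ω)) T (b - a) ∂μ) := by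
  have hderiv : ∀ s, Measurable fun ω => deriv (X ω) s := fun s =>
    hmeas.comp measurable_prodMk_right
  have hslope : Measurable fun ω => (X ω b - X ω a) / (b - a) :=
    (measurable_sub_of_measurable_deriv hC1 hmeas a b).div_const _
  have hIcc : Icc a b ⊆ Icc 0 T := Icc_subset_Icc ha hb
  have hmvt : ∀ ω, ∃ ξ ∈ Ioo a b, deriv (X ω) ξ = (X ω b - X ω a) / (b - a) := fun ω =>
    exists_deriv_eq_slope (X ω) hab (hC1 ω).continuous.continuousOn
      ((hC1 ω).differentiable one_ne_zero).differentiableOn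
  have hbound : ∀ ω, |(X ω b - X ω a) / (b - a)| ≤ M := fun ω => by
    obtain ⟨ξ, hξ, heq⟩ := hmvt ω
    exact heq ▸ hM ω ξ (hIcc (Ioo_subset_Icc_self hξ))
  have hclose : ∀ ω, |(X ω b - X ω a) / (b - a) - deriv (X ω) t|
      ≤ ratModulus (deriv (X ω)) T (b - a) := fun ω => by
    obtain ⟨ξ, hξ, heq⟩ := hmvt ω
    rw [← heq]
    exact abs_sub_le_ratModulus ((hC1 ω).continuous_deriv le_rfl) hT (hM ω)
      (hIcc (Ioo_subset_Icc_self hξ)) (hIcc ht)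
      (abs_sub_lt_iff.2 ⟨by linarith [hξ.2, ht.1], by linarith [hξ.1, ht.2]⟩)
  have hdiff_int : Integrable (fun ω => |(X ω b - X ω a) / (b - a) - deriv (X ω) t|) μ :=
    ((integrable_of_forall_abs_le hslope hbound).sub
      (integrable_of_forall_abs_le (hderiv t) fun ω => hM ω t (hIcc ht))).abs
  have hmod_int : Integrable (fun ω => ratModulus (deriv (X ω)) T (b - a)) μ :=
    integrable_of_forall_abs_le (Measurable.ratModulus hderiv T _) fun ω => by
      rw [abs_of_nonneg ratModulus_nonneg]
      exact ratModulus_le_two_mul (hM ω) hM₀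
  exact (abs_sqrt_variance_sub_sqrt_variance_le hslope (hderiv t) hbound
    fun ω => hM ω t (hIcc ht)).trans <| Real.sqrt_le_sqrt <|
      mul_le_mul_of_nonneg_left (integral_mono hdiff_int hmod_int hclose) (by positivity)

theorem MPGD_eq_integral_sqrt_variance (μ : Measure Ω) (T : ℝ)
    (hmeas : Measurable fun p : Ω × ℝ => deriv (X p.1) p.2) :
    MPGD μ T X = (1 / T) * ∫ t in (0 : ℝ)..T, √Var[fun ω => deriv (X ω) t; μ] := by
  unfold MPGD
  congr 1
  refine intervalIntegral.integral_congr fun t _ => ?_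
  rw [variance_eq_integral (X := fun ω => deriv (X ω) t)
    (hmeas.comp measurable_prodMk_right).aemeasurable]

theorem abs_gridSum_sub_MPGD_le (μ : Measure Ω) [IsProbabilityMeasure μ] {T M : ℝ}
    (hT : 0 < T) (hC1 : ∀ ω, ContDiff ℝ 1 (X ω))
    (hmeas : Measurable fun p : Ω × ℝ => deriv (X p.1) p.2) (hM₀ : 0 ≤ M)
    (hM : ∀ ω, ∀ t ∈ Icc 0 T, |deriv (X ω) t| ≤ M) {ε : ℝ} (hε : 0 < ε) {K : ℕ}
    (hK : K * ε = T) :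
    |(ε / T) * ∑ k ∈ Finset.range K,
        √Var[fun ω => (X ω ((k + 1) * ε) - X ω (k * ε)) / ε; μ] - MPGD μ T X|
      ≤ √(8 * M * ∫ ω, ratModulus (deriv (X ω)) T ε ∂μ) := by
  set σ := fun t => √Var[fun ω => deriv (X ω) t; μ]
  have hσ : IntervalIntegrable σ volume 0 T :=
    (intervalIntegrable_const (c := M)).mono_fun'
      (measurable_variance_section μ hmeas).sqrt.aestronglyMeasurable
      (ae_restrict_of_forall_mem measurableSet_uIoc fun t ht => by
        rw [uIoc_of_le hT.le] at ht
        show ‖σ t‖ ≤ M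
        rw [Real.norm_of_nonneg (Real.sqrt_nonneg _)]
        exact sqrt_variance_le_of_forall_abs_le (hmeas.comp measurable_prodMk_right)
          fun ω => hM ω t (Ioc_subset_Icc_self ht))
  have hcells := abs_sum_sub_integral_le (a := fun k : ℕ => (k : ℝ) * ε)
    (monotone_nat_of_le_succ fun k => by push_cast; linarith) (K := K)
    (c := fun k => √Var[fun ω => (X ω ((k + 1) * ε) - X ω (k * ε)) / ε; μ])
    (by simpa [hK] using hσ) fun k hk t ht => by
      have hcell := abs_sqrt_variance_slope_sub_le μ hT hC1 hmeas hM₀ hM (a := k * ε)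
        (b := (k + 1) * ε) (t := t) (by linarith) (by positivity)
        (by rw [← hK]; gcongr; exact_mod_cast hk) (by push_cast at ht; exact Ioc_subset_Icc_self ht)
      rwa [show ((k : ℝ) + 1) * ε - k * ε = ε by ring] at hcell
  simp only [Nat.cast_add, Nat.cast_one, Nat.cast_zero, zero_mul, hK, sub_zero,
    show ∀ k : ℝ, (k + 1) * ε - k * ε = ε from fun k => by ring] at hcells
  rw [← Finset.mul_sum, mul_comm T] at hcells
  rw [MPGD_eq_integral_sqrt_variance μ T hmeas, div_mul_eq_mul_div, one_div_mul_eq_div,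
    ← sub_div, abs_div, abs_of_pos hT, div_le_iff₀ hT]
  exact hcells

end RandomC1

/-- Let `T > 0`, `(Ω, μ)` a probability space and `X : Ω → (ℝ → ℝ)` a
random continuously differentiable function with jointly measurable and uniformly bounded
derivative on `[0,T]`. For step `ε` with `T/ε = K ∈ ℕ` and grid points `t = ε, 2ε, …, T`,
let `σ_ε(t)` be the standard deviation (over `ω`) of the divided difference
`(X ω t − X ω (t−ε))/ε`. Then `(ε/T) ∑_t σ_ε(t) → MPGD` as `ε → 0` along steps with
`T/ε ∈ ℕ`. -/
theorem statement12 {Ω : Type*} [MeasurableSpace Ω] (μ : Measure Ω) [IsProbabilityMeasure μ]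
    (T : ℝ) (hT : 0 < T) (X : Ω → ℝ → ℝ)
    (hC1 : ∀ ω, ContDiff ℝ 1 (X ω))
    (hmeas : Measurable fun p : Ω × ℝ => deriv (X p.1) p.2)
    (M : ℝ) (hM : ∀ ω, ∀ t ∈ Set.Icc (0:ℝ) T, |deriv (X ω) t| ≤ M) :
    ∀ δ > 0, ∃ ε₀ > 0, ∀ ε : ℝ, 0 < ε → ε < ε₀ → ∀ K : ℕ, (K : ℝ) * ε = T →
      |(ε / T) * ∑ k ∈ Finset.range K,
          Real.sqrt (∫ ω,
            ((X ω (((k : ℝ) + 1) * ε) - X ω ((k : ℝ) * ε)) / ε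
              - ∫ ω', (X ω' (((k : ℝ) + 1) * ε) - X ω' ((k : ℝ) * ε)) / ε ∂μ) ^ 2 ∂μ)
        - MPGD μ T X| < δ := by
  intro δ hδ
  have hM₀ : 0 ≤ M :=
    (abs_nonneg _).trans (hM (nonempty_of_isProbabilityMeasure μ).some 0 ⟨le_rfl, hT.le⟩)
  have hbound : Tendsto (fun ε => √(8 * M * ∫ ω, ratModulus (deriv (X ω)) T ε ∂μ))
      (𝓝[>] 0) (𝓝 0) := by
    simpa using ((tendsto_integral_ratModulus hM₀ (fun ω => (hC1 ω).continuous_deriv le_rfl)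
      (fun t => hmeas.comp measurable_prodMk_right) hM).const_mul (8 * M)).sqrt
  obtain ⟨ε₀, hε₀, hsmall⟩ :=
    mem_nhdsGT_iff_exists_Ioo_subset.1 (hbound.eventually (gt_mem_nhds hδ))
  refine ⟨ε₀, hε₀, fun ε hε hεε₀ K hK => ?_⟩
  have hvar : ∀ k : ℕ, ∫ ω, ((X ω ((k + 1) * ε) - X ω (k * ε)) / ε
      - ∫ ω', (X ω' ((k + 1) * ε) - X ω' (k * ε)) / ε ∂μ) ^ 2 ∂μ
      = Var[fun ω => (X ω ((k + 1) * ε) - X ω (k * ε)) / ε; μ] := fun k =>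
    (variance_eq_integral
      ((measurable_sub_of_measurable_deriv hC1 hmeas _ _).div_const ε).aemeasurable).symm
  simp only [hvar]
  exact (abs_gridSum_sub_MPGD_le μ hT hC1 hmeas hM₀ hM hε hK).trans_lt (hsmall ⟨hε, hεε₀⟩)
end
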